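/- Let n = 3, κ = 3, f(x) = −x₁ − x₂ + 2x₁x₂ + x₃², F₁(x) = (x₁, x₁ + x₂, x₃ − 1), F₂(x) = (x₃ − 2x₂, 2 − x₃, x₁ − x₂ + x₃). For every t ∈ (0, ½), both x̃^t = (0, t, 1) and x̂^t = (t, 0, 1) are nondegenerate KKT points of the Scholtes regularization S(t) with quadratic index 0; for x̃^t the active sets are H = {2}, N₁ = {1,3}, N₂ = ∅ with unique multipliers η₂ = 1, ν₁,₁ = 2t, ν₁,₃ = 2 − t, and for x̂^t they are H = {1,2}, N₁ = {3}, N₂ = ∅ with unique multipliers η₁ = 2t/(1+2t), η₂ = 1/(1+2t), ν₁,₃ = 2 + (2t² − t)/(1+2t). Both x̃^t and x̂^t converge to (0,0,1) as t → 0. -/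

import Mathlib

/-!
At both points exactly three constraints of `S(t)` are active in `ℝ³`, and their gradients have
only the origin as common zero, i.e. `T^S_x = {0}`. Three functionals on `ℝ³` with trivial
common kernel are linearly independent, so LICQ holds; ND3 is vacuous and the quadratic index
is `0` on the zero space. Under LICQ the KKT multipliers are unique, so it remains to check that
the stated ones satisfy the KKT conditions, which is a direct computation.
-/

open Filter Topology Set

namespace MPCCPaper

variable {n κ : ℕ}

/-- Differential of the `j`-th component of `F` at `x`. -/
noncomputable def Dc (F : (Fin n → ℝ) → Fin κ → ℝ) (j : Fin κ) (x : Fin n → ℝ) :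
    (Fin n → ℝ) →L[ℝ] ℝ :=
  fderiv ℝ (fun y => F y j) x

/-- The MPCC feasible set `M`. -/
def Mset (F1 F2 : (Fin n → ℝ) → Fin κ → ℝ) : Set (Fin n → ℝ) :=
  {x | ∀ j, F1 x j * F2 x j = 0 ∧ 0 ≤ F1 x j ∧ 0 ≤ F2 x j}

/-- Feasible set `M^S(t)` of the Scholtes regularization. -/
def MS (F1 F2 : (Fin n → ℝ) → Fin κ → ℝ) (t : ℝ) : Set (Fin n → ℝ) :=
  {x | ∀ j, F1 x j * F2 x j ≤ t ∧ 0 ≤ F1 x j ∧ 0 ≤ F2 x j}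

/-- Feasible set `M^{S=}(t)` of the smoothing with equality constraints. -/
def MSeq (F1 F2 : (Fin n → ℝ) → Fin κ → ℝ) (t : ℝ) : Set (Fin n → ℝ) :=
  {x | ∀ j, F1 x j * F2 x j = t ∧ 0 ≤ F1 x j ∧ 0 ≤ F2 x j}

def a01 (F1 F2 : (Fin n → ℝ) → Fin κ → ℝ) (x : Fin n → ℝ) : Set (Fin κ) :=
  {j | F1 x j = 0 ∧ 0 < F2 x j}

def a10 (F1 F2 : (Fin n → ℝ) → Fin κ → ℝ) (x : Fin n → ℝ) : Set (Fin κ) :=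
  {j | 0 < F1 x j ∧ F2 x j = 0}

def a00 (F1 F2 : (Fin n → ℝ) → Fin κ → ℝ) (x : Fin n → ℝ) : Set (Fin κ) :=
  {j | F1 x j = 0 ∧ F2 x j = 0}

/-- Active set `H(x)` of the regularized constraints. -/
def Hset (F1 F2 : (Fin n → ℝ) → Fin κ → ℝ) (t : ℝ) (x : Fin n → ℝ) : Set (Fin κ) :=
  {j | F1 x j * F2 x j = t}

def N1set (F1 : (Fin n → ℝ) → Fin κ → ℝ) (x : Fin n → ℝ) : Set (Fin κ) :=
  {j | F1 x j = 0}

def N2set (F2 : (Fin n → ℝ) → Fin κ → ℝ) (x : Fin n → ℝ) : Set (Fin κ) :=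
  {j | F2 x j = 0}

/-- MPCC-tailored linear independence constraint qualification. -/
def MPCCLICQ (F1 F2 : (Fin n → ℝ) → Fin κ → ℝ) (x : Fin n → ℝ) : Prop :=
  LinearIndependent ℝ
    (Sum.elim
      (fun j : ↥(a01 F1 F2 x ∪ a00 F1 F2 x) => Dc F1 j.1 x)
      (fun j : ↥(a10 F1 F2 x ∪ a00 F1 F2 x) => Dc F2 j.1 x))

/-- Gradient of the product constraint `F1_j · F2_j` at `x`. -/
noncomputable def gradProd (F1 F2 : (Fin n → ℝ) → Fin κ → ℝ) (j : Fin κ) (x : Fin n → ℝ) :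
    (Fin n → ℝ) →L[ℝ] ℝ :=
  F2 x j • Dc F1 j x + F1 x j • Dc F2 j x

/-- LICQ for the Scholtes regularization `S(t)`. -/
def SLICQ (F1 F2 : (Fin n → ℝ) → Fin κ → ℝ) (t : ℝ) (x : Fin n → ℝ) : Prop :=
  LinearIndependent ℝ
    (Sum.elim (fun j : ↥(Hset F1 F2 t x) => gradProd F1 F2 j.1 x)
      (Sum.elim (fun j : ↥(N1set F1 x) => Dc F1 j.1 x)
        (fun j : ↥(N2set F2 x) => Dc F2 j.1 x)))

/-- W-stationarity with prescribed multipliers (supported on the active index sets). -/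
structure WStatWith (f : (Fin n → ℝ) → ℝ) (F1 F2 : (Fin n → ℝ) → Fin κ → ℝ)
    (x : Fin n → ℝ) (σ1 σ2 ϱ1 ϱ2 : Fin κ → ℝ) : Prop where
  feas : x ∈ Mset F1 F2
  supp_s1 : ∀ j, j ∉ a01 F1 F2 x → σ1 j = 0
  supp_s2 : ∀ j, j ∉ a10 F1 F2 x → σ2 j = 0
  supp_r1 : ∀ j, j ∉ a00 F1 F2 x → ϱ1 j = 0
  supp_r2 : ∀ j, j ∉ a00 F1 F2 x → ϱ2 j = 0
  stat : fderiv ℝ f x =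
    ∑ j, (σ1 j • Dc F1 j x + σ2 j • Dc F2 j x + ϱ1 j • Dc F1 j x + ϱ2 j • Dc F2 j x)

/-- C-stationarity with prescribed multipliers. -/
def CStatWith (f : (Fin n → ℝ) → ℝ) (F1 F2 : (Fin n → ℝ) → Fin κ → ℝ)
    (x : Fin n → ℝ) (σ1 σ2 ϱ1 ϱ2 : Fin κ → ℝ) : Prop :=
  WStatWith f F1 F2 x σ1 σ2 ϱ1 ϱ2 ∧ ∀ j ∈ a00 F1 F2 x, 0 ≤ ϱ1 j * ϱ2 j

/-- S-stationarity with prescribed multipliers. -/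
def SStatWith (f : (Fin n → ℝ) → ℝ) (F1 F2 : (Fin n → ℝ) → Fin κ → ℝ)
    (x : Fin n → ℝ) (σ1 σ2 ϱ1 ϱ2 : Fin κ → ℝ) : Prop :=
  WStatWith f F1 F2 x σ1 σ2 ϱ1 ϱ2 ∧ ∀ j ∈ a00 F1 F2 x, 0 ≤ ϱ1 j ∧ 0 ≤ ϱ2 j

/-- The MPCC Lagrange function for given multipliers. -/
noncomputable def Lag (f : (Fin n → ℝ) → ℝ) (F1 F2 : (Fin n → ℝ) → Fin κ → ℝ)
    (σ1 σ2 ϱ1 ϱ2 : Fin κ → ℝ) (x : Fin n → ℝ) : ℝ :=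
  f x - ∑ j, (σ1 j * F1 x j + σ2 j * F2 x j + ϱ1 j * F1 x j + ϱ2 j * F2 x j)

/-- The Hessian of `g` at `x` as a bilinear map, evaluated at `(ξ, ζ)`. -/
noncomputable def hBil (g : (Fin n → ℝ) → ℝ) (x ξ ζ : Fin n → ℝ) : ℝ :=
  iteratedFDeriv ℝ 2 g x ![ξ, ζ]

/-- The Hessian quadratic form of `g` at `x`. -/
noncomputable def hQ (g : (Fin n → ℝ) → ℝ) (x ξ : Fin n → ℝ) : ℝ := hBil g x ξ ξ

/-- The tangent space `T_x` of MPCC at `x`. -/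
def Tspace (F1 F2 : (Fin n → ℝ) → Fin κ → ℝ) (x : Fin n → ℝ) : Set (Fin n → ℝ) :=
  {ξ | (∀ j ∈ a01 F1 F2 x ∪ a00 F1 F2 x, Dc F1 j x ξ = 0) ∧
       (∀ j ∈ a10 F1 F2 x ∪ a00 F1 F2 x, Dc F2 j x ξ = 0)}

/-- Nondegeneracy of a bilinear form on a set (subspace). -/
def NondegOn (B : (Fin n → ℝ) → (Fin n → ℝ) → ℝ) (T : Set (Fin n → ℝ)) : Prop :=
  ∀ ξ ∈ T, (∀ ζ ∈ T, B ξ ζ = 0) → ξ = 0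

/-- `Q` has negative index `q` on `T`: `q` is the maximal dimension of a subspace of `T`
on which `Q` is negative definite. -/
def HasNegIndexOn (Q : (Fin n → ℝ) → ℝ) (T : Set (Fin n → ℝ)) (q : ℕ) : Prop :=
  (∃ W : Submodule ℝ (Fin n → ℝ), (W : Set (Fin n → ℝ)) ⊆ T ∧
      Module.finrank ℝ ↥W = q ∧ ∀ ξ ∈ W, ξ ≠ 0 → Q ξ < 0) ∧
  (∀ W : Submodule ℝ (Fin n → ℝ), (W : Set (Fin n → ℝ)) ⊆ T →
      (∀ ξ ∈ W, ξ ≠ 0 → Q ξ < 0) → Module.finrank ℝ ↥W ≤ q)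

/-- Nondegenerate C-stationary point (NDC1, NDC2, NDC3) with prescribed multipliers. -/
def NondegCStat (f : (Fin n → ℝ) → ℝ) (F1 F2 : (Fin n → ℝ) → Fin κ → ℝ)
    (x : Fin n → ℝ) (σ1 σ2 ϱ1 ϱ2 : Fin κ → ℝ) : Prop :=
  CStatWith f F1 F2 x σ1 σ2 ϱ1 ϱ2 ∧ MPCCLICQ F1 F2 x ∧
  (∀ j ∈ a00 F1 F2 x, 0 < ϱ1 j * ϱ2 j) ∧
  NondegOn (hBil (Lag f F1 F2 σ1 σ2 ϱ1 ϱ2) x) (Tspace F1 F2 x)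

/-- Condition NDC4: non-biactive multipliers do not vanish. -/
def NDC4 (F1 F2 : (Fin n → ℝ) → Fin κ → ℝ) (x : Fin n → ℝ) (σ1 σ2 : Fin κ → ℝ) : Prop :=
  (∀ j ∈ a01 F1 F2 x, σ1 j ≠ 0) ∧ (∀ j ∈ a10 F1 F2 x, σ2 j ≠ 0)

/-- The biactive index: number of negative biactive multiplier pairs. -/
noncomputable def BIndex (F1 F2 : (Fin n → ℝ) → Fin κ → ℝ) (x : Fin n → ℝ)
    (ϱ1 ϱ2 : Fin κ → ℝ) : ℕ :=
  {j | j ∈ a00 F1 F2 x ∧ ϱ1 j < 0 ∧ ϱ2 j < 0}.ncard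

/-- The C-index of a C-stationary point equals `c`. -/
def HasCIndex (f : (Fin n → ℝ) → ℝ) (F1 F2 : (Fin n → ℝ) → Fin κ → ℝ)
    (x : Fin n → ℝ) (σ1 σ2 ϱ1 ϱ2 : Fin κ → ℝ) (c : ℕ) : Prop :=
  ∃ q : ℕ,
    HasNegIndexOn (hQ (Lag f F1 F2 σ1 σ2 ϱ1 ϱ2) x) (Tspace F1 F2 x) q ∧
    c = q + BIndex F1 F2 x ϱ1 ϱ2

/-- Karush-Kuhn-Tucker point of the Scholtes regularization `S(t)` with multipliers. -/
structure KKTWith (f : (Fin n → ℝ) → ℝ) (F1 F2 : (Fin n → ℝ) → Fin κ → ℝ)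
    (t : ℝ) (x : Fin n → ℝ) (η ν1 ν2 : Fin κ → ℝ) : Prop where
  feas : x ∈ MS F1 F2 t
  eta_nn : ∀ j, 0 ≤ η j
  nu1_nn : ∀ j, 0 ≤ ν1 j
  nu2_nn : ∀ j, 0 ≤ ν2 j
  comp_eta : ∀ j, η j * (t - F1 x j * F2 x j) = 0
  comp_nu1 : ∀ j, ν1 j * F1 x j = 0
  comp_nu2 : ∀ j, ν2 j * F2 x j = 0
  stat : fderiv ℝ f x =
    ∑ j, (-(η j) • gradProd F1 F2 j x + ν1 j • Dc F1 j x + ν2 j • Dc F2 j x)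

/-- The Lagrange function of the Scholtes regularization `S(t)`. -/
noncomputable def LagS (f : (Fin n → ℝ) → ℝ) (F1 F2 : (Fin n → ℝ) → Fin κ → ℝ)
    (t : ℝ) (η ν1 ν2 : Fin κ → ℝ) (x : Fin n → ℝ) : ℝ :=
  f x - ∑ j, (η j * (t - F1 x j * F2 x j) + ν1 j * F1 x j + ν2 j * F2 x j)

/-- The tangent space `T^S_x` of `S(t)` at `x`. -/
def TspaceS (F1 F2 : (Fin n → ℝ) → Fin κ → ℝ) (t : ℝ) (x : Fin n → ℝ) :
    Set (Fin n → ℝ) :=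
  {ξ | (∀ j ∈ Hset F1 F2 t x, gradProd F1 F2 j x ξ = 0) ∧
       (∀ j ∈ N1set F1 x, Dc F1 j x ξ = 0) ∧
       (∀ j ∈ N2set F2 x, Dc F2 j x ξ = 0)}

/-- Nondegenerate KKT point of `S(t)` (ND1, ND2, ND3) with prescribed multipliers. -/
def NondegKKT (f : (Fin n → ℝ) → ℝ) (F1 F2 : (Fin n → ℝ) → Fin κ → ℝ)
    (t : ℝ) (x : Fin n → ℝ) (η ν1 ν2 : Fin κ → ℝ) : Prop :=
  KKTWith f F1 F2 t x η ν1 ν2 ∧ SLICQ F1 F2 t x ∧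
  (∀ j ∈ Hset F1 F2 t x, 0 < η j) ∧
  (∀ j ∈ N1set F1 x, 0 < ν1 j) ∧
  (∀ j ∈ N2set F2 x, 0 < ν2 j) ∧
  NondegOn (hBil (LagS f F1 F2 t η ν1 ν2) x) (TspaceS F1 F2 t x)

/-- KKT point of the smoothing `S^=(t)` with multipliers. -/
structure KKTEqWith (f : (Fin n → ℝ) → ℝ) (F1 F2 : (Fin n → ℝ) → Fin κ → ℝ)
    (t : ℝ) (x : Fin n → ℝ) (lam ν1 ν2 : Fin κ → ℝ) : Prop where
  feas : x ∈ MSeq F1 F2 t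
  nu1_nn : ∀ j, 0 ≤ ν1 j
  nu2_nn : ∀ j, 0 ≤ ν2 j
  comp_nu1 : ∀ j, ν1 j * F1 x j = 0
  comp_nu2 : ∀ j, ν2 j * F2 x j = 0
  stat : fderiv ℝ f x =
    ∑ j, (lam j • gradProd F1 F2 j x + ν1 j • Dc F1 j x + ν2 j • Dc F2 j x)

/-- The Lagrange function of the smoothing `S^=(t)`. -/
noncomputable def LagSeq (f : (Fin n → ℝ) → ℝ) (F1 F2 : (Fin n → ℝ) → Fin κ → ℝ)
    (t : ℝ) (lam ν1 ν2 : Fin κ → ℝ) (x : Fin n → ℝ) : ℝ :=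
  f x - ∑ j, (lam j * (F1 x j * F2 x j - t) + ν1 j * F1 x j + ν2 j * F2 x j)

/-- The tangent space `T^{S=}_x` of `S^=(t)` at `x`. -/
def TspaceSeq (F1 F2 : (Fin n → ℝ) → Fin κ → ℝ) (x : Fin n → ℝ) : Set (Fin n → ℝ) :=
  {ξ | (∀ j, gradProd F1 F2 j x ξ = 0) ∧
       (∀ j, F1 x j = 0 → Dc F1 j x ξ = 0) ∧
       (∀ j, F2 x j = 0 → Dc F2 j x ξ = 0)}

/-- LICQ for the smoothing `S^=(t)` at `x`: gradients of all active constraints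
(all equality constraints together with the active bound constraints) are linearly
independent. -/
def SeqLICQ (F1 F2 : (Fin n → ℝ) → Fin κ → ℝ) (x : Fin n → ℝ) : Prop :=
  LinearIndependent ℝ
    (Sum.elim (fun j : Fin κ => gradProd F1 F2 j x)
      (Sum.elim (fun j : ↥(N1set F1 x) => Dc F1 j.1 x)
        (fun j : ↥(N2set F2 x) => Dc F2 j.1 x)))

/-- Nondegenerate KKT point of the smoothing `S^=(t)` with prescribed multipliers. -/
def NondegKKTEq (f : (Fin n → ℝ) → ℝ) (F1 F2 : (Fin n → ℝ) → Fin κ → ℝ)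
    (t : ℝ) (x : Fin n → ℝ) (lam ν1 ν2 : Fin κ → ℝ) : Prop :=
  KKTEqWith f F1 F2 t x lam ν1 ν2 ∧ SeqLICQ F1 F2 x ∧
  (∀ j ∈ N1set F1 x, 0 < ν1 j) ∧
  (∀ j ∈ N2set F2 x, 0 < ν2 j) ∧
  NondegOn (hBil (LagSeq f F1 F2 t lam ν1 ν2) x) (TspaceSeq F1 F2 x)

/-- The critical cone `C_x` associated with an S-stationary point and its multipliers. -/
def Ccone (F1 F2 : (Fin n → ℝ) → Fin κ → ℝ) (x : Fin n → ℝ)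
    (σ1 σ2 ϱ1 ϱ2 : Fin κ → ℝ) : Set (Fin n → ℝ) :=
  {ξ | (∀ j, ((j ∈ a01 F1 F2 x ∧ σ1 j ≠ 0) ∨ (j ∈ a00 F1 F2 x ∧ 0 < ϱ1 j)) →
        Dc F1 j x ξ = 0) ∧
       (∀ j, ((j ∈ a10 F1 F2 x ∧ σ2 j ≠ 0) ∨ (j ∈ a00 F1 F2 x ∧ 0 < ϱ2 j)) →
        Dc F2 j x ξ = 0)}

/-- The cone `C^=_x` of critical directions used for MPCC-SOC. -/
def CconeEq (F1 F2 : (Fin n → ℝ) → Fin κ → ℝ) (x : Fin n → ℝ)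
    (ϱ1 ϱ2 : Fin κ → ℝ) : Set (Fin n → ℝ) :=
  {ξ | (∀ j, (j ∈ a01 F1 F2 x ∨ (j ∈ a00 F1 F2 x ∧ 0 < ϱ1 j)) → Dc F1 j x ξ = 0) ∧
       (∀ j, (j ∈ a10 F1 F2 x ∨ (j ∈ a00 F1 F2 x ∧ 0 < ϱ2 j)) → Dc F2 j x ξ = 0) ∧
       (∀ j ∈ a00 F1 F2 x, ϱ1 j = 0 → 0 ≤ Dc F1 j x ξ) ∧
       (∀ j ∈ a00 F1 F2 x, ϱ2 j = 0 → 0 ≤ Dc F2 j x ξ)}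

/-- Strong second order sufficiency condition. -/
def SSOSC (f : (Fin n → ℝ) → ℝ) (F1 F2 : (Fin n → ℝ) → Fin κ → ℝ)
    (x : Fin n → ℝ) (σ1 σ2 ϱ1 ϱ2 : Fin κ → ℝ) : Prop :=
  ∀ ξ ∈ Ccone F1 F2 x σ1 σ2 ϱ1 ϱ2, ξ ≠ 0 → 0 < hQ (Lag f F1 F2 σ1 σ2 ϱ1 ϱ2) x ξ

/-- Second order condition for MPCC (MPCC-SOC). -/
def MPCCSOC (f : (Fin n → ℝ) → ℝ) (F1 F2 : (Fin n → ℝ) → Fin κ → ℝ)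
    (x : Fin n → ℝ) (σ1 σ2 ϱ1 ϱ2 : Fin κ → ℝ) : Prop :=
  ∀ ξ ∈ CconeEq F1 F2 x ϱ1 ϱ2, ξ ≠ 0 → 0 < hQ (Lag f F1 F2 σ1 σ2 ϱ1 ϱ2) x ξ

noncomputable def fEx2 : (Fin 3 → ℝ) → ℝ :=
  fun x => -x 0 - x 1 + 2 * x 0 * x 1 + (x 2)^2

noncomputable def F1Ex2 : (Fin 3 → ℝ) → Fin 3 → ℝ :=
  fun x => ![x 0, x 0 + x 1, x 2 - 1]

noncomputable def F2Ex2 : (Fin 3 → ℝ) → Fin 3 → ℝ :=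
  fun x => ![x 2 - 2 * x 1, 2 - x 2, x 0 - x 1 + x 2]

noncomputable def xtEx2 (t : ℝ) : Fin 3 → ℝ := ![t/2, t/2, 1]

noncomputable def ηEx2 (t : ℝ) : Fin 3 → ℝ := ![0, 1 - t, 0]

noncomputable def ν1Ex2 (t : ℝ) : Fin 3 → ℝ := ![0, 0, 2 - t + t^2]

theorem linearIndependent_of_card_eq_finrank {𝕜 E ι : Type*} [NontriviallyNormedField 𝕜]
    [NormedAddCommGroup E] [NormedSpace 𝕜 E] [FiniteDimensional 𝕜 E] [Finite ι]
    (v : ι → E →L[𝕜] 𝕜) (hcard : Nat.card ι = Module.finrank 𝕜 E)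
    (hv : ∀ ξ, (∀ i, v i ξ = 0) → ξ = 0) : LinearIndependent 𝕜 v := by
  classical
  have := Fintype.ofFinite ι
  let L : E →ₗ[𝕜] ι → 𝕜 := LinearMap.pi fun i => (v i : E →ₗ[𝕜] 𝕜)
  have hL : Function.Surjective L := by
    refine (LinearMap.injective_iff_surjective_of_finrank_eq_finrank ?_).1 ?_
    · rw [Module.finrank_fintype_fun_eq_card, ← hcard, Nat.card_eq_fintype_card]
    · refine (injective_iff_map_eq_zero L).2 fun ξ hξ => hv ξ fun i => congrFun hξ i
  rw [Fintype.linearIndependent_iff]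
  intro g hg k
  obtain ⟨ξ, hξ⟩ := hL (Pi.single k 1)
  have hvξ : ∀ i, v i ξ = (Pi.single k 1 : ι → 𝕜) i := fun i => congrFun hξ i
  simpa [hvξ, Pi.single_apply] using congrArg (· ξ) hg

lemma sum_set_coe_of_eq_zero {ι M : Type*} [Fintype ι] [AddCommMonoid M] (s : Set ι)
    [Fintype s] {f : ι → M} (hf : ∀ i ∉ s, f i = 0) : ∑ i : s, f i = ∑ i, f i := by
  rw [Finset.sum_set_coe, Fintype.sum_subset]
  intro i hi
  simpa using not_imp_comm.1 (hf i) hi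

section General

variable {F1 F2 : (Fin n → ℝ) → Fin κ → ℝ} {t : ℝ} {x : Fin n → ℝ}

@[simp]
lemma gradProd_apply (j : Fin κ) (ξ : Fin n → ℝ) :
    gradProd F1 F2 j x ξ = F2 x j * Dc F1 j x ξ + F1 x j * Dc F2 j x ξ := by
  simp [gradProd]

lemma zero_mem_TspaceS : (0 : Fin n → ℝ) ∈ TspaceS F1 F2 t x :=
  ⟨fun _ _ => map_zero _, fun _ _ => map_zero _, fun _ _ => map_zero _⟩

lemma nondegOn_singleton_zero (B : (Fin n → ℝ) → (Fin n → ℝ) → ℝ) : NondegOn B {0} :=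
  fun _ hξ _ => hξ

lemma hasNegIndexOn_singleton_zero (Q : (Fin n → ℝ) → ℝ) : HasNegIndexOn Q {0} 0 := by
  refine ⟨⟨⊥, by simp, finrank_bot ℝ _, fun ξ hξ hne => absurd hξ hne⟩,
    fun W hW _ => ?_⟩
  have : W = ⊥ := (Submodule.eq_bot_iff W).2 fun ξ hξ => hW hξ
  simp [this]

lemma slicq_of_TspaceS_eq_singleton_zero (hT : TspaceS F1 F2 t x = {0})
    (hcard : (Hset F1 F2 t x).ncard + (N1set F1 x).ncard + (N2set F2 x).ncard = n) :
    SLICQ F1 F2 t x := by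
  refine linearIndependent_of_card_eq_finrank _ ?_ fun ξ hξ => ?_
  · simp only [Nat.card_sum, Nat.card_coe_set_eq, Module.finrank_fin_fun]
    omega
  · have hmem : ξ ∈ TspaceS F1 F2 t x :=
      ⟨fun j hj => hξ (.inl ⟨j, hj⟩), fun j hj => hξ (.inr (.inl ⟨j, hj⟩)),
        fun j hj => hξ (.inr (.inr ⟨j, hj⟩))⟩
    rwa [hT] at hmem

lemma SLICQ.eq_zero_of_sum_eq_zero (hL : SLICQ F1 F2 t x) {a b c : Fin κ → ℝ}
    (ha : ∀ j ∉ Hset F1 F2 t x, a j = 0) (hb : ∀ j ∉ N1set F1 x, b j = 0)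
    (hc : ∀ j ∉ N2set F2 x, c j = 0)
    (hsum : ∑ j, (a j • gradProd F1 F2 j x + b j • Dc F1 j x + c j • Dc F2 j x) = 0) :
    a = 0 ∧ b = 0 ∧ c = 0 := by
  classical
  have key := Fintype.linearIndependent_iff.1 hL
    (Sum.elim (fun j => a j) (Sum.elim (fun j => b j) (fun j => c j))) (by
      simp only [Fintype.sum_sum_type, Sum.elim_inl, Sum.elim_inr]
      rw [sum_set_coe_of_eq_zero (f := fun j => a j • gradProd F1 F2 j x) _
          fun j hj => by simp [ha j hj],
        sum_set_coe_of_eq_zero (f := fun j => b j • Dc F1 j x) _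
          fun j hj => by simp [hb j hj],
        sum_set_coe_of_eq_zero (f := fun j => c j • Dc F2 j x) _
          fun j hj => by simp [hc j hj],
        ← add_assoc, ← Finset.sum_add_distrib, ← Finset.sum_add_distrib]
      exact hsum)
  refine ⟨funext fun j => ?_, funext fun j => ?_, funext fun j => ?_⟩
  · by_cases hj : j ∈ Hset F1 F2 t x
    exacts [key (.inl ⟨j, hj⟩), ha j hj]
  · by_cases hj : j ∈ N1set F1 x
    exacts [key (.inr (.inl ⟨j, hj⟩)), hb j hj]
  · by_cases hj : j ∈ N2set F2 x
    exacts [key (.inr (.inr ⟨j, hj⟩)), hc j hj]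

namespace KKTWith

variable {f : (Fin n → ℝ) → ℝ} {η ν1 ν2 : Fin κ → ℝ}

lemma eta_eq_zero (h : KKTWith f F1 F2 t x η ν1 ν2) {j : Fin κ} (hj : j ∉ Hset F1 F2 t x) :
    η j = 0 :=
  (mul_eq_zero.1 (h.comp_eta j)).resolve_right (sub_ne_zero.2 (Ne.symm hj))

lemma nu1_eq_zero (h : KKTWith f F1 F2 t x η ν1 ν2) {j : Fin κ} (hj : j ∉ N1set F1 x) :
    ν1 j = 0 :=
  (mul_eq_zero.1 (h.comp_nu1 j)).resolve_right hj

lemma nu2_eq_zero (h : KKTWith f F1 F2 t x η ν1 ν2) {j : Fin κ} (hj : j ∉ N2set F2 x) :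
    ν2 j = 0 :=
  (mul_eq_zero.1 (h.comp_nu2 j)).resolve_right hj

theorem multipliers_unique {η' ν1' ν2' : Fin κ → ℝ} (hL : SLICQ F1 F2 t x)
    (h : KKTWith f F1 F2 t x η ν1 ν2) (h' : KKTWith f F1 F2 t x η' ν1' ν2') :
    η = η' ∧ ν1 = ν1' ∧ ν2 = ν2' := by
  have hsum : ∑ j, ((η' j - η j) • gradProd F1 F2 j x + (ν1 j - ν1' j) • Dc F1 j x
      + (ν2 j - ν2' j) • Dc F2 j x) = 0 := by
    rw [← sub_eq_zero.2 (h.stat.symm.trans h'.stat), ← Finset.sum_sub_distrib]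
    refine Finset.sum_congr rfl fun j _ => ?_
    module
  obtain ⟨hη, hν1, hν2⟩ := hL.eq_zero_of_sum_eq_zero
    (fun j hj => by simp [h.eta_eq_zero hj, h'.eta_eq_zero hj])
    (fun j hj => by simp [h.nu1_eq_zero hj, h'.nu1_eq_zero hj])
    (fun j hj => by simp [h.nu2_eq_zero hj, h'.nu2_eq_zero hj]) hsum
  refine ⟨funext fun j => ?_, funext fun j => ?_, funext fun j => ?_⟩
  · simpa [sub_eq_zero, eq_comm] using congrFun hη j
  · simpa [sub_eq_zero] using congrFun hν1 j
  · simpa [sub_eq_zero] using congrFun hν2 j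

end KKTWith

end General

section Example

open _root_.ContinuousLinearMap

lemma hasFDerivAt_coord (i : Fin 3) (x : Fin 3 → ℝ) :
    HasFDerivAt (fun y : Fin 3 → ℝ => y i) (proj i : (Fin 3 → ℝ) →L[ℝ] ℝ) x :=
  hasFDerivAt_apply i x

variable (x ξ : Fin 3 → ℝ)

@[simp]
lemma Dc_F1Ex2_zero : Dc F1Ex2 0 x ξ = ξ 0 := by
  simp [Dc, F1Ex2, (hasFDerivAt_coord 0 x).fderiv]

@[simp]
lemma Dc_F1Ex2_one : Dc F1Ex2 1 x ξ = ξ 0 + ξ 1 := by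
  simp [Dc, F1Ex2, ((hasFDerivAt_coord 0 x).fun_add (hasFDerivAt_coord 1 x)).fderiv]

@[simp]
lemma Dc_F1Ex2_two : Dc F1Ex2 2 x ξ = ξ 2 := by
  simp [Dc, F1Ex2, ((hasFDerivAt_coord 2 x).sub_const 1).fderiv]

@[simp]
lemma Dc_F2Ex2_zero : Dc F2Ex2 0 x ξ = ξ 2 - 2 * ξ 1 := by
  simp [Dc, F2Ex2,
    ((hasFDerivAt_coord 2 x).fun_sub ((hasFDerivAt_coord 1 x).const_mul 2)).fderiv]

@[simp]
lemma Dc_F2Ex2_one : Dc F2Ex2 1 x ξ = -ξ 2 := by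
  simp [Dc, F2Ex2, ((hasFDerivAt_coord 2 x).const_sub 2).fderiv]

@[simp]
lemma Dc_F2Ex2_two : Dc F2Ex2 2 x ξ = ξ 0 - ξ 1 + ξ 2 := by
  simp [Dc, F2Ex2, (((hasFDerivAt_coord 0 x).fun_sub (hasFDerivAt_coord 1 x)).fun_add
    (hasFDerivAt_coord 2 x)).fderiv]

@[simp]
lemma fderiv_fEx2 :
    fderiv ℝ fEx2 x ξ = (2 * x 1 - 1) * ξ 0 + (2 * x 0 - 1) * ξ 1 + 2 * x 2 * ξ 2 := by
  have h0 := hasFDerivAt_coord 0 x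
  have h1 := hasFDerivAt_coord 1 x
  have h2 := hasFDerivAt_coord 2 x
  have h : HasFDerivAt fEx2 _ x :=
    ((h0.fun_neg.fun_sub h1).fun_add ((h0.const_mul 2).fun_mul h1)).fun_add (h2.pow 2)
  rw [h.fderiv]
  simp
  ring

end Example

section XTilde

variable {t : ℝ}

lemma F1Ex2_xTilde : F1Ex2 ![0, t, 1] = ![0, t, 0] := by
  funext j; fin_cases j <;> simp [F1Ex2]

lemma F2Ex2_xTilde : F2Ex2 ![0, t, 1] = ![1 - 2 * t, 1, 1 - t] := by
  funext j; fin_cases j <;> simp [F2Ex2] <;> ring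

variable (ht : t ∈ Ioo (0 : ℝ) (1 / 2))
include ht

lemma Hset_xTilde : Hset F1Ex2 F2Ex2 t ![0, t, 1] = {1} := by
  ext j
  fin_cases j <;> simp [Hset, F1Ex2_xTilde, F2Ex2_xTilde, ht.1.ne]

lemma N1set_xTilde : N1set F1Ex2 ![0, t, 1] = {0, 2} := by
  ext j
  fin_cases j <;> simp [N1set, F1Ex2_xTilde, ht.1.ne']

lemma N2set_xTilde : N2set F2Ex2 ![0, t, 1] = ∅ := by
  ext j
  fin_cases j <;> simp [N2set, F2Ex2_xTilde] <;> linarith [ht.1, ht.2]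

lemma TspaceS_xTilde : TspaceS F1Ex2 F2Ex2 t ![0, t, 1] = {0} := by
  refine Subset.antisymm (fun ξ ⟨hH, hN1, _⟩ => ?_)
    (singleton_subset_iff.2 zero_mem_TspaceS)
  rw [Hset_xTilde ht] at hH
  rw [N1set_xTilde ht] at hN1
  have h0 := hN1 0 (by simp)
  have h1 := hH 1 rfl
  have h2 := hN1 2 (by simp)
  simp [F1Ex2_xTilde, F2Ex2_xTilde] at h0 h1 h2
  have h1' : ξ 1 = 0 := by linear_combination h1 - h0 + t * h2
  funext j
  fin_cases j <;> simpa

lemma kktWith_xTilde :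
    KKTWith fEx2 F1Ex2 F2Ex2 t ![0, t, 1] ![0, 1, 0] ![2*t, 0, 2 - t] 0 := by
  obtain ⟨ht0, ht1⟩ := ht
  refine ⟨fun j => ?_, fun j => ?_, fun j => ?_, fun j => ?_, fun j => ?_, fun j => ?_,
    fun j => ?_, ?_⟩
  rotate_right
  · ext ξ
    simp [Fin.sum_univ_three, F1Ex2_xTilde, F2Ex2_xTilde]
    ring
  all_goals fin_cases j <;> simp [F1Ex2_xTilde, F2Ex2_xTilde] <;> grind

lemma slicq_xTilde : SLICQ F1Ex2 F2Ex2 t ![0, t, 1] :=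
  slicq_of_TspaceS_eq_singleton_zero (TspaceS_xTilde ht)
    (by simp [Hset_xTilde ht, N1set_xTilde ht, N2set_xTilde ht])

lemma nondegKKT_xTilde :
    NondegKKT fEx2 F1Ex2 F2Ex2 t ![0, t, 1] ![0, 1, 0] ![2*t, 0, 2 - t] 0 := by
  refine ⟨kktWith_xTilde ht, slicq_xTilde ht, ?_, ?_, ?_,
    TspaceS_xTilde ht ▸ nondegOn_singleton_zero _⟩
  · simp [Hset_xTilde ht]
  · simp [N1set_xTilde ht]
    constructor <;> linarith [ht.1, ht.2]
  · simp [N2set_xTilde ht]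

end XTilde

section XHat

variable {t : ℝ}

lemma F1Ex2_xHat : F1Ex2 ![t, 0, 1] = ![t, t, 0] := by
  funext j; fin_cases j <;> simp [F1Ex2]

lemma F2Ex2_xHat : F2Ex2 ![t, 0, 1] = ![1, 1, 1 + t] := by
  funext j; fin_cases j <;> simp [F2Ex2] <;> ring

lemma nu1_xHat_pos (ht : -(1 / 2) < t) : 0 < 2 + (2 * t ^ 2 - t) / (1 + 2 * t) := by
  have hd : 0 < 1 + 2 * t := by linarith
  have h : 2 + (2 * t ^ 2 - t) / (1 + 2 * t) = (2 * t ^ 2 + 3 * t + 2) / (1 + 2 * t) := by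
    field_simp
    ring
  rw [h]
  exact div_pos (by nlinarith [sq_nonneg (t + 3 / 4)]) hd

variable (ht : 0 < t)
include ht

lemma Hset_xHat : Hset F1Ex2 F2Ex2 t ![t, 0, 1] = {0, 1} := by
  ext j
  fin_cases j <;> simp [Hset, F1Ex2_xHat, F2Ex2_xHat, ht.ne]

lemma N1set_xHat : N1set F1Ex2 ![t, 0, 1] = {2} := by
  ext j
  fin_cases j <;> simp [N1set, F1Ex2_xHat, ht.ne']

lemma N2set_xHat : N2set F2Ex2 ![t, 0, 1] = ∅ := by
  ext j
  fin_cases j <;> simp [N2set, F2Ex2_xHat]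
  linarith

lemma TspaceS_xHat : TspaceS F1Ex2 F2Ex2 t ![t, 0, 1] = {0} := by
  refine Subset.antisymm (fun ξ ⟨hH, hN1, _⟩ => ?_)
    (singleton_subset_iff.2 zero_mem_TspaceS)
  rw [Hset_xHat ht] at hH
  rw [N1set_xHat ht] at hN1
  have h0 := hH 0 (by simp)
  have h1 := hH 1 (by simp)
  have h2 := hN1 2 rfl
  simp [F1Ex2_xHat, F2Ex2_xHat] at h0 h1 h2
  have h1' : ξ 1 = 0 := by
    have : (1 + 2 * t) * ξ 1 = 0 := by linear_combination h1 - h0 + 2 * t * h2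
    exact (mul_eq_zero.1 this).resolve_left (by linarith)
  have h0' : ξ 0 = 0 := by linear_combination h1 - h1' + t * h2
  funext j
  fin_cases j <;> simpa

lemma kktWith_xHat : KKTWith fEx2 F1Ex2 F2Ex2 t ![t, 0, 1]
    ![2*t/(1 + 2*t), 1/(1 + 2*t), 0] ![0, 0, 2 + (2*t^2 - t)/(1 + 2*t)] 0 := by
  have hd : 0 < 1 + 2 * t := by linarith
  have hη0 : 0 < 2 * t / (1 + 2 * t) := div_pos (by linarith) hd
  have hν := nu1_xHat_pos (t := t) (by linarith)
  refine ⟨fun j => ?_, fun j => ?_, fun j => ?_, fun j => ?_, fun j => ?_, fun j => ?_,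
    fun j => ?_, ?_⟩
  rotate_right
  · ext ξ
    simp [Fin.sum_univ_three, F1Ex2_xHat, F2Ex2_xHat]
    field_simp
    ring
  all_goals fin_cases j <;> simp [F1Ex2_xHat, F2Ex2_xHat] <;> grind

lemma slicq_xHat : SLICQ F1Ex2 F2Ex2 t ![t, 0, 1] :=
  slicq_of_TspaceS_eq_singleton_zero (TspaceS_xHat ht)
    (by simp [Hset_xHat ht, N1set_xHat ht, N2set_xHat ht])

lemma nondegKKT_xHat : NondegKKT fEx2 F1Ex2 F2Ex2 t ![t, 0, 1]
    ![2*t/(1 + 2*t), 1/(1 + 2*t), 0] ![0, 0, 2 + (2*t^2 - t)/(1 + 2*t)] 0 := by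
  have hd : 0 < 1 + 2 * t := by linarith
  refine ⟨kktWith_xHat ht, slicq_xHat ht, ?_, ?_, ?_,
    TspaceS_xHat ht ▸ nondegOn_singleton_zero _⟩
  · simp [Hset_xHat ht]
    exact ⟨div_pos (by linarith) hd, hd⟩
  · simpa [N1set_xHat ht] using nu1_xHat_pos (t := t) (by linarith)
  · simp [N2set_xHat ht]

end XHat

/-- Example (non-uniqueness in absence of NDC4): for `t ∈ (0, 1/2)`,
both `x̃^t = (0,t,1)` and `x̂^t = (t,0,1)` are nondegenerate KKT points of `S(t)` with
quadratic index `0`, with the stated active sets and unique multipliers, and both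
converge to `(0,0,1)` as `t → 0⁺`. -/
theorem example_two_minimizers :
    (∀ t ∈ Set.Ioo (0:ℝ) (1/2),
      (NondegKKT fEx2 F1Ex2 F2Ex2 t ![0, t, 1] ![0, 1, 0] ![2*t, 0, 2 - t] 0 ∧
        Hset F1Ex2 F2Ex2 t ![0, t, 1] = {1} ∧
        N1set F1Ex2 ![0, t, 1] = {0, 2} ∧
        N2set F2Ex2 ![0, t, 1] = ∅ ∧
        (∀ η ν1 ν2 : Fin 3 → ℝ, KKTWith fEx2 F1Ex2 F2Ex2 t ![0, t, 1] η ν1 ν2 →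
          η = ![0, 1, 0] ∧ ν1 = ![2*t, 0, 2 - t] ∧ ν2 = 0) ∧
        HasNegIndexOn
          (hQ (LagS fEx2 F1Ex2 F2Ex2 t ![0, 1, 0] ![2*t, 0, 2 - t] 0) ![0, t, 1])
          (TspaceS F1Ex2 F2Ex2 t ![0, t, 1]) 0) ∧
      (NondegKKT fEx2 F1Ex2 F2Ex2 t ![t, 0, 1]
          ![2*t/(1 + 2*t), 1/(1 + 2*t), 0] ![0, 0, 2 + (2*t^2 - t)/(1 + 2*t)] 0 ∧
        Hset F1Ex2 F2Ex2 t ![t, 0, 1] = {0, 1} ∧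
        N1set F1Ex2 ![t, 0, 1] = {2} ∧
        N2set F2Ex2 ![t, 0, 1] = ∅ ∧
        (∀ η ν1 ν2 : Fin 3 → ℝ, KKTWith fEx2 F1Ex2 F2Ex2 t ![t, 0, 1] η ν1 ν2 →
          η = ![2*t/(1 + 2*t), 1/(1 + 2*t), 0] ∧
          ν1 = ![0, 0, 2 + (2*t^2 - t)/(1 + 2*t)] ∧ ν2 = 0) ∧
        HasNegIndexOn
          (hQ (LagS fEx2 F1Ex2 F2Ex2 t ![2*t/(1 + 2*t), 1/(1 + 2*t), 0]
            ![0, 0, 2 + (2*t^2 - t)/(1 + 2*t)] 0) ![t, 0, 1])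
          (TspaceS F1Ex2 F2Ex2 t ![t, 0, 1]) 0)) ∧
    Tendsto (fun t : ℝ => (![0, t, 1] : Fin 3 → ℝ)) (𝓝[>] (0:ℝ)) (𝓝 ![0, 0, 1]) ∧
    Tendsto (fun t : ℝ => (![t, 0, 1] : Fin 3 → ℝ)) (𝓝[>] (0:ℝ)) (𝓝 ![0, 0, 1]) := by
  refine ⟨fun t ht => ⟨⟨nondegKKT_xTilde ht, Hset_xTilde ht, N1set_xTilde ht, N2set_xTilde ht,
      fun _ _ _ hK => hK.multipliers_unique (slicq_xTilde ht) (kktWith_xTilde ht),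
      TspaceS_xTilde ht ▸ hasNegIndexOn_singleton_zero _⟩,
    ⟨nondegKKT_xHat ht.1, Hset_xHat ht.1, N1set_xHat ht.1, N2set_xHat ht.1,
      fun _ _ _ hK => hK.multipliers_unique (slicq_xHat ht.1) (kktWith_xHat ht.1),
      TspaceS_xHat ht.1 ▸ hasNegIndexOn_singleton_zero _⟩⟩, ?_, ?_⟩
  all_goals
    exact tendsto_nhdsWithin_of_tendsto_nhds (Continuous.tendsto' (by fun_prop) 0 _ (by simp))

end MPCCPaper
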